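/- Let n ≥ 5 be odd, and in ℝ^n set γ = ε_{n-2} − ε_2. With S = {ε_{2i-1}+ε_{2i} : 1 ≤ i ≤ (n−3)/2} ∪ {ε_{n-2}±ε_n, ε_{n-1}−ε_1} ∪ {ε_{n-i-1}−ε_i : 2 ≤ i ≤ (n−3)/2}, the element s(γ) = 2(ε_1+ε_2) + (ε_3+ε_4) + ⋯ + (ε_{n-4}+ε_{n-3}) + (ε_{n-1}−ε_1) is a nonnegative-integer combination of elements of S and satisfies γ + s(γ) = ε_1 + ε_2 + ⋯ + ε_{n-1} = ϖ_{n-1} + ϖ_n in type D_n. -/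
import Mathlib


/-- 1-based orthonormal basis vectors `ε_k` of `ℝ^n` (zero out of range). -/
noncomputable def eps (n k : ℕ) : EuclideanSpace ℝ (Fin n) :=
  if h : 1 ≤ k ∧ k ≤ n then EuclideanSpace.single ⟨k - 1, by omega⟩ (1 : ℝ) else 0

/-- The fundamental weights of type `D_n` : `ϖ_k = ε_1 + ⋯ + ε_k` for
`k ≤ n-2`, `ϖ_{n-1} = (ε_1 + ⋯ + ε_{n-1} - ε_n)/2` and
`ϖ_n = (ε_1 + ⋯ + ε_{n-1} + ε_n)/2`. -/
noncomputable def varpi (n k : ℕ) : EuclideanSpace ℝ (Fin n) :=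
  if k ≤ n - 2 then ∑ j ∈ Finset.Icc 1 k, eps n j
  else if k = n - 1 then ((1 : ℝ) / 2) • ((∑ j ∈ Finset.Icc 1 (n - 1), eps n j) - eps n n)
  else if k = n then ((1 : ℝ) / 2) • ((∑ j ∈ Finset.Icc 1 (n - 1), eps n j) + eps n n)
  else 0

lemma pairs_sum (n m : ℕ) :
    ∑ i ∈ Finset.Icc 1 m, (eps n (2*i-1) + eps n (2*i)) = ∑ j ∈ Finset.Icc 1 (2*m), eps n j := by
  induction m with
  | zero => simp
  | succ m ih =>
    rw [Finset.sum_Icc_succ_top (by omega : 1 ≤ m+1), ih]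
    have e1 : 2*(m+1) = (2*m+1)+1 := by omega
    rw [e1, Finset.sum_Icc_succ_top (by omega : 1 ≤ 2*m+1+1),
      Finset.sum_Icc_succ_top (by omega : 1 ≤ 2*m+1), Nat.add_sub_cancel]
    abel

/-- Let `n ≥ 5` be odd, `γ = ε_{n-2} - ε_2`, and `S` as in the
construction of the adapted pair for `π' = π \ {α_{n-1}, α_n}` in type `D_n`.
Then `s(γ) = 2(ε_1 + ε_2) + (ε_3 + ε_4) + ⋯ + (ε_{n-4} + ε_{n-3}) +
(ε_{n-1} - ε_1)` is a nonnegative-integer combination of elements of `S`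
and `γ + s(γ) = ε_1 + ⋯ + ε_{n-1} = ϖ_{n-1} + ϖ_n`. -/
theorem statement_14 (n : ℕ) (hn : 5 ≤ n) (hnodd : Odd n)
    (S : Set (EuclideanSpace ℝ (Fin n)))
    (hS : S = {v | ∃ i, 1 ≤ i ∧ i ≤ (n - 3) / 2 ∧ v = eps n (2 * i - 1) + eps n (2 * i)}
        ∪ {eps n (n - 2) + eps n n, eps n (n - 2) - eps n n, eps n (n - 1) - eps n 1}
        ∪ {v | ∃ i, 2 ≤ i ∧ i ≤ (n - 3) / 2 ∧ v = eps n (n - i - 1) - eps n i})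
    (γ sγ : EuclideanSpace ℝ (Fin n))
    (hγ : γ = eps n (n - 2) - eps n 2)
    (hsγ : sγ = (2 : ℝ) • (eps n 1 + eps n 2)
        + (∑ i ∈ Finset.Icc 2 ((n - 3) / 2), (eps n (2 * i - 1) + eps n (2 * i)))
        + (eps n (n - 1) - eps n 1)) :
    (∃ c : EuclideanSpace ℝ (Fin n) →₀ ℕ, (↑c.support : Set (EuclideanSpace ℝ (Fin n))) ⊆ S ∧
      sγ = c.sum fun v m => (m : ℝ) • v) ∧
    γ + sγ = ∑ j ∈ Finset.Icc 1 (n - 1), eps n j ∧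
    (∑ j ∈ Finset.Icc 1 (n - 1), eps n j) = varpi n (n - 1) + varpi n n := by
  classical
  obtain ⟨t, ht⟩ := hnodd
  set m := (n - 3) / 2 with hm
  have hm1 : 1 ≤ m := by omega
  have h2m : 2 * m = n - 3 := by omega
  -- splitting off the i = 1 term
  have hicc : Finset.Icc 1 m = insert 1 (Finset.Icc 2 m) := by
    ext x; simp only [Finset.mem_Icc, Finset.mem_insert]; omega
  have hins : ∑ i ∈ Finset.Icc 1 m, (eps n (2*i-1) + eps n (2*i))
      = (eps n 1 + eps n 2) + ∑ i ∈ Finset.Icc 2 m, (eps n (2*i-1) + eps n (2*i)) := by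
    rw [hicc, Finset.sum_insert (by simp)]
  have htail : ∑ i ∈ Finset.Icc 2 m, (eps n (2*i-1) + eps n (2*i))
      = ∑ j ∈ Finset.Icc 1 (n-3), eps n j - (eps n 1 + eps n 2) := by
    have := pairs_sum n m
    rw [hins, h2m] at this
    rw [← this]; abel
  have hsum : ∑ j ∈ Finset.Icc 1 (n-1), eps n j
      = ∑ j ∈ Finset.Icc 1 (n-3), eps n j + eps n (n-2) + eps n (n-1) := by
    have e1 : n-1 = (n-2)+1 := by omega
    have e2 : n-2 = (n-3)+1 := by omega
    rw [e1, Finset.sum_Icc_succ_top (by omega), ← e1, e2,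
      Finset.sum_Icc_succ_top (by omega), ← e2]
  refine ⟨?_, ?_, ?_⟩
  · -- the nonnegative integer combination
    refine ⟨Finsupp.single (eps n 1 + eps n 2) 2
      + (∑ i ∈ Finset.Icc 2 m, Finsupp.single (eps n (2*i-1) + eps n (2*i)) 1)
      + Finsupp.single (eps n (n-1) - eps n 1) 1, ?_, ?_⟩
    · intro v hv
      simp only [Finset.coe_subset, Finset.mem_coe] at hv
      have h1 := Finsupp.support_add (g₁ := Finsupp.single (eps n 1 + eps n 2) 2
          + (∑ i ∈ Finset.Icc 2 m, Finsupp.single (eps n (2*i-1) + eps n (2*i)) 1))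
          (g₂ := Finsupp.single (eps n (n-1) - eps n 1) 1)
      have h2 := Finsupp.support_add (g₁ := Finsupp.single (eps n 1 + eps n 2) (2:ℕ))
          (g₂ := ∑ i ∈ Finset.Icc 2 m, Finsupp.single (eps n (2*i-1) + eps n (2*i)) (1:ℕ))
      have hv' := h1 hv
      rw [Finset.mem_union] at hv'
      rcases hv' with hv' | hv'
      · have hv'' := h2 hv'
        rw [Finset.mem_union] at hv''
        rcases hv'' with hv'' | hv''
        · have := Finsupp.support_single_subset hv''
          simp only [Finset.mem_singleton] at this
          subst this
          rw [hS]; left; left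
          exact ⟨1, le_refl 1, hm1, by norm_num⟩
        · have := Finsupp.support_finset_sum hv''
          simp only [Finset.mem_biUnion] at this
          obtain ⟨i, hi, hvi⟩ := this
          have := Finsupp.support_single_subset hvi
          simp only [Finset.mem_singleton] at this
          subst this
          rw [hS]; left; left
          rw [Finset.mem_Icc] at hi
          exact ⟨i, by omega, hi.2, rfl⟩
      · have := Finsupp.support_single_subset hv'
        simp only [Finset.mem_singleton] at this
        subst this
        rw [hS]; left; right
        right; right; rfl
    · have hc2 : ((∑ i ∈ Finset.Icc 2 m, Finsupp.single (eps n (2*i-1) + eps n (2*i)) (1:ℕ)).sum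
          fun v k => (k:ℝ) • v) = ∑ i ∈ Finset.Icc 2 m, (eps n (2*i-1) + eps n (2*i)) := by
        rw [← Finsupp.sum_finset_sum_index (by intro a; simp)
          (by intro a b₁ b₂; rw [Nat.cast_add, add_smul])]
        refine Finset.sum_congr rfl fun i _ => ?_
        rw [Finsupp.sum_single_index (by simp), Nat.cast_one, one_smul]
      rw [hsγ, Finsupp.sum_add_index' (by intro a; simp)
          (by intro a b₁ b₂; rw [Nat.cast_add, add_smul]),
        Finsupp.sum_add_index' (by intro a; simp)
          (by intro a b₁ b₂; rw [Nat.cast_add, add_smul]),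
        Finsupp.sum_single_index (by simp), Finsupp.sum_single_index (by simp), hc2,
        Nat.cast_ofNat, Nat.cast_one, one_smul]
  · rw [hγ, hsγ, htail, hsum]
    module
  · have e1 : ¬ (n - 1 ≤ n - 2) := by omega
    have e2 : ¬ (n ≤ n - 2) := by omega
    have e3 : n ≠ n - 1 := by omega
    rw [varpi, varpi, if_neg e1, if_pos rfl, if_neg e2, if_neg e3, if_pos rfl]
    module
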